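/- arXiv:1207.2622 — 3 statements merged into one kernel-verified Lean document; each statement's English description precedes it below -/
import Mathlib

section
/- A set of p = I+J-1 cells of an I×J table forms a strictly minimal pattern for the independence model (i.e., the corresponding columns of the design matrix of the two-way independence loglinear model are linearly independent) if and only if the set does not contain any k-cycle for k = 2, ..., min(I,J). -/
def designCol (I J : ℕ) (c : Fin I × Fin J) : Unit ⊕ Fin (I - 1) ⊕ Fin (J - 1) → ℝ :=
  fun r => match r with
  | Sum.inl _ => 1
  | Sum.inr (Sum.inl a) => if (c.1 : ℕ) = (a : ℕ) then 1 else 0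
  | Sum.inr (Sum.inr b) => if (c.2 : ℕ) = (b : ℕ) then 1 else 0

def IsKCycle {I J : ℕ} (k : ℕ) (C : Finset (Fin I × Fin J)) : Prop :=
  2 ≤ k ∧ C.card = 2 * k ∧
    (C.image Prod.fst).card = k ∧ (C.image Prod.snd).card = k ∧
    (∀ i ∈ C.image Prod.fst, (C.filter fun c => c.1 = i).card = 2) ∧
    (∀ j ∈ C.image Prod.snd, (C.filter fun c => c.2 = j).card = 2)

/-! Regard the cells as the edges of the bipartite graph on rows and columns. The design column
of `(i, j)` has the form `a i + b j`, so the 2k columns of a k-cycle lie in a space of dimension at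
most 2k - 1. Conversely, a dependence is a nonzero weighting of the cells with vanishing row and
column sums, so no vertex meets its support exactly once and the support has at least as many
edges as vertices. Any such edge set contains a nonempty 2-regular one, which is a k-cycle: delete
a pendant edge, or any edge if the inequality is strict, until every vertex has degree two. -/

open Finset

section Fibers

variable {γ δ : Type*} [DecidableEq δ] {s : Finset γ} {f : γ → δ}

theorem image_erase_of_filter_eq_singleton [DecidableEq γ] {c : γ}
    (hc : {x ∈ s | f x = f c} = {c}) :
    (s.erase c).image f = (s.image f).erase (f c) := by
  ext b
  simp only [mem_image, mem_erase]
  constructor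
  · rintro ⟨x, ⟨hxc, hxs⟩, rfl⟩
    refine ⟨fun hx => hxc ?_, x, hxs, rfl⟩
    simpa [hc] using (mem_filter.2 ⟨hxs, hx⟩ : x ∈ {x ∈ s | f x = f c})
  · rintro ⟨hb, x, hxs, rfl⟩
    exact ⟨x, ⟨by rintro rfl; exact hb rfl, hxs⟩, rfl⟩

theorem two_le_card_fiber_of_ne_singleton (h : ∀ c ∈ s, {x ∈ s | f x = f c} ≠ {c}) :
    ∀ b ∈ s.image f, 2 ≤ #{x ∈ s | f x = b} := by
  rintro _ hb
  obtain ⟨c, hcs, rfl⟩ := mem_image.1 hb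
  have hpos : 0 < #{x ∈ s | f x = f c} := card_pos.2 ⟨c, mem_filter.2 ⟨hcs, rfl⟩⟩
  by_contra! hlt
  obtain ⟨d, hd⟩ := card_eq_one.1 (by omega : #{x ∈ s | f x = f c} = 1)
  obtain ⟨hds, hdc⟩ := mem_filter.1 (hd ▸ mem_singleton_self d)
  exact h d hds (hdc ▸ hd)

theorem card_eq_two_mul_card_image (h : ∀ b ∈ s.image f, #{x ∈ s | f x = b} = 2) :
    #s = 2 * #(s.image f) :=
  le_antisymm (card_le_mul_card_image s 2 fun b hb => (h b hb).le)
    (mul_card_image_le_card s 2 fun b hb => (h b hb).ge)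

theorem card_fiber_eq_two_of_two_mul_card_image_eq
    (h : ∀ b ∈ s.image f, 2 ≤ #{x ∈ s | f x = b}) (heq : 2 * #(s.image f) = #s) :
    ∀ b ∈ s.image f, #{x ∈ s | f x = b} = 2 := by
  rw [card_eq_sum_card_image f s, mul_comm, ← smul_eq_mul, ← sum_const] at heq
  exact fun b hb => ((sum_eq_sum_iff_of_le h).1 heq b hb).symm

theorem two_le_card_fiber_filter_ne_zero {R : Type*} [AddCommMonoid R] [DecidableEq R]
    {g : γ → R} (h : ∀ b, ∑ x ∈ s with f x = b, g x = 0) :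
    ∀ b ∈ {x ∈ s | g x ≠ 0}.image f, 2 ≤ #{x ∈ {x ∈ s | g x ≠ 0} | f x = b} := by
  refine two_le_card_fiber_of_ne_singleton fun c hc hsingle => (mem_filter.1 hc).2 ?_
  rw [← h (f c), ← sum_filter_ne_zero, filter_comm, hsingle, sum_singleton]

end Fibers

theorem sum_fiber_eq_zero_of_sum_eq_zero {γ R : Type*} [AddCommMonoid R] {s : Finset γ} {n : ℕ}
    {f : γ → Fin n} {g : γ → R} (htot : ∑ x ∈ s, g x = 0)
    (h : ∀ a : Fin (n - 1), ∑ x ∈ s with (f x : ℕ) = a, g x = 0) (i : Fin n) :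
    ∑ x ∈ s with f x = i, g x = 0 := by
  have hlt (i : Fin n) (hi : (i : ℕ) < n - 1) : ∑ x ∈ s with f x = i, g x = 0 := by
    simpa only [Fin.val_eq_val] using h ⟨i, hi⟩
  by_cases hi : (i : ℕ) < n - 1
  · exact hlt i hi
  rw [← sum_fiberwise s f g, sum_eq_single i] at htot
  · exact htot
  · intro j _ hji
    exact hlt j (by have := Fin.val_ne_of_ne hji; omega)
  · exact fun hi' => absurd (mem_univ i) hi'

section Cycles

variable {α β : Type*} [DecidableEq α] [DecidableEq β]

def IsTwoRegular (C : Finset (α × β)) : Prop :=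
  (∀ i ∈ C.image Prod.fst, #{c ∈ C | c.1 = i} = 2) ∧
    ∀ j ∈ C.image Prod.snd, #{c ∈ C | c.2 = j} = 2

theorem exists_isTwoRegular_subset (T : Finset (α × β)) (hT : T.Nonempty)
    (hle : #(T.image Prod.fst) + #(T.image Prod.snd) ≤ #T) :
    ∃ C ⊆ T, C.Nonempty ∧ IsTwoRegular C := by
  induction T using Finset.strongInduction with
  | H T ih =>
  have hrows : 0 < #(T.image Prod.fst) := card_pos.2 (hT.image _)
  have hcols : 0 < #(T.image Prod.snd) := card_pos.2 (hT.image _)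
  have hrows_erase (c : α × β) : #((T.erase c).image Prod.fst) ≤ #(T.image Prod.fst) :=
    card_le_card (image_subset_image (erase_subset c T))
  have hcols_erase (c : α × β) : #((T.erase c).image Prod.snd) ≤ #(T.image Prod.snd) :=
    card_le_card (image_subset_image (erase_subset c T))
  have descend (c : α × β) (hc : c ∈ T)
      (hle' : #((T.erase c).image Prod.fst) + #((T.erase c).image Prod.snd) < #T) :
      ∃ C ⊆ T, C.Nonempty ∧ IsTwoRegular C := by
    have hcard : #(T.erase c) = #T - 1 := card_erase_of_mem hc
    obtain ⟨C, hCT, hC⟩ := ih (T.erase c) (erase_ssubset hc) (card_pos.1 (by omega)) (by omega)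
    exact ⟨C, hCT.trans (erase_subset c T), hC⟩
  by_cases hsingle : ∃ c ∈ T, {x ∈ T | x.1 = c.1} = {c} ∨ {x ∈ T | x.2 = c.2} = {c}
  · obtain ⟨c, hc, hrow | hcol⟩ := hsingle
    · refine descend c hc ?_
      rw [image_erase_of_filter_eq_singleton hrow, card_erase_of_mem (mem_image_of_mem _ hc)]
      have := hcols_erase c
      omega
    · refine descend c hc ?_
      rw [image_erase_of_filter_eq_singleton (f := Prod.snd) hcol,
        card_erase_of_mem (mem_image_of_mem _ hc)]
      have := hrows_erase c
      omega
  push Not at hsingle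
  have hrow2 := two_le_card_fiber_of_ne_singleton fun c hc => (hsingle c hc).1
  have hcol2 := two_le_card_fiber_of_ne_singleton fun c hc => (hsingle c hc).2
  have hrows_le := mul_card_image_le_card T 2 hrow2
  have hcols_le := mul_card_image_le_card T 2 hcol2
  obtain hlt | heq := hle.lt_or_eq
  · obtain ⟨c, hc⟩ := hT
    have := hrows_erase c
    have := hcols_erase c
    exact descend c hc (by omega)
  · exact ⟨T, subset_rfl, hT, card_fiber_eq_two_of_two_mul_card_image_eq hrow2 (by omega),
      card_fiber_eq_two_of_two_mul_card_image_eq hcol2 (by omega)⟩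

end Cycles

theorem IsTwoRegular.isKCycle {I J : ℕ} {C : Finset (Fin I × Fin J)} (hC : IsTwoRegular C)
    (hne : C.Nonempty) : IsKCycle #(C.image Prod.fst) C := by
  have hrows := card_eq_two_mul_card_image hC.1
  have hcols := card_eq_two_mul_card_image hC.2
  have hprod : #C ≤ #(C.image Prod.fst) * #(C.image Prod.snd) :=
    (card_le_card subset_product).trans (card_product _ _).le
  have hpos : 0 < #(C.image Prod.fst) := card_pos.2 (hne.image _)
  refine ⟨?_, hrows, rfl, by omega, hC.1, hC.2⟩
  nlinarith

theorem IsKCycle.le_min {I J k : ℕ} {C : Finset (Fin I × Fin J)} (hC : IsKCycle k C) :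
    k ≤ min I J := by
  obtain ⟨-, -, hrows, hcols, -⟩ := hC
  have := card_le_univ (C.image Prod.fst)
  have := card_le_univ (C.image Prod.snd)
  simp only [Fintype.card_fin] at *
  omega

theorem LinearIndepOn.card_lt_card_image_fst_add_card_image_snd {R M α β : Type*} [Ring R]
    [StrongRankCondition R] [AddCommGroup M] [Module R M] [DecidableEq α] [DecidableEq β]
    {v : α × β → M} (a : α → M) (b : β → M) {C : Finset (α × β)}
    (hv : ∀ c ∈ C, v c = a c.1 + b c.2) (hli : LinearIndepOn R v ↑C) (hne : C.Nonempty) :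
    #C < #(C.image Prod.fst) + #(C.image Prod.snd) := by
  classical
  obtain ⟨i₀, hi₀⟩ := hne.image Prod.fst
  -- `a i + b j = (a i - a i₀) + (a i₀ + b j)`, and the first summand vanishes for `i = i₀`
  set w : Finset M := ((C.image Prod.fst).erase i₀).image (fun i => a i - a i₀) ∪
    (C.image Prod.snd).image (fun j => a i₀ + b j)
  have hspan :
      Set.range (fun c : (C : Set (α × β)) => v c) ≤ Submodule.span R (w : Set M) := by
    rintro _ ⟨⟨c, hc⟩, rfl⟩
    have hb : a i₀ + b c.2 ∈ Submodule.span R (w : Set M) :=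
      Submodule.subset_span (mem_union_right _ (mem_image_of_mem _ (mem_image_of_mem _ hc)))
    change v c ∈ Submodule.span R (w : Set M)
    rw [hv c hc]
    by_cases hci : c.1 = i₀
    · rwa [hci]
    · have ha : a c.1 - a i₀ ∈ Submodule.span R (w : Set M) :=
        Submodule.subset_span (mem_union_left _
          (mem_image_of_mem _ (mem_erase.2 ⟨hci, mem_image_of_mem _ hc⟩)))
      convert add_mem ha hb using 1
      abel
  have hcard := linearIndependent_le_span_aux' _ hli (w : Set M) hspan
  simp only [coe_sort_coe, Fintype.card_coe] at hcard
  have hw : #w ≤ (#(C.image Prod.fst) - 1) + #(C.image Prod.snd) :=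
    (card_union_le _ _).trans (add_le_add
      (card_image_le.trans (card_erase_of_mem hi₀).le) card_image_le)
  have := card_pos.2 ⟨i₀, hi₀⟩
  omega

section Design

variable {I J : ℕ}

def rowPart (I J : ℕ) (i : Fin I) : Unit ⊕ Fin (I - 1) ⊕ Fin (J - 1) → ℝ :=
  Sum.elim 1 (Sum.elim (fun a => if (i : ℕ) = a then 1 else 0) 0)

def colPart (I J : ℕ) (j : Fin J) : Unit ⊕ Fin (I - 1) ⊕ Fin (J - 1) → ℝ :=
  Sum.elim 0 (Sum.elim 0 fun b => if (j : ℕ) = b then 1 else 0)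

theorem designCol_eq_add (c : Fin I × Fin J) :
    designCol I J c = rowPart I J c.1 + colPart I J c.2 := by
  funext r
  rcases r with _ | a | b <;> simp [designCol, rowPart, colPart]

variable {S : Finset (Fin I × Fin J)} {g : Fin I × Fin J → ℝ}

theorem sum_eq_zero_of_sum_smul_designCol_eq_zero (hg : ∑ c ∈ S, g c • designCol I J c = 0) :
    ∑ c ∈ S, g c = 0 := by
  simpa [Finset.sum_apply, designCol] using congrFun hg (Sum.inl ())

theorem sum_filter_fst_eq_zero_of_sum_smul_designCol_eq_zero
    (hg : ∑ c ∈ S, g c • designCol I J c = 0) (i : Fin I) :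
    ∑ c ∈ S with c.1 = i, g c = 0 := by
  refine sum_fiber_eq_zero_of_sum_eq_zero (sum_eq_zero_of_sum_smul_designCol_eq_zero hg)
    (fun a => ?_) i
  simpa [Finset.sum_apply, designCol, sum_filter] using congrFun hg (Sum.inr (Sum.inl a))

theorem sum_filter_snd_eq_zero_of_sum_smul_designCol_eq_zero
    (hg : ∑ c ∈ S, g c • designCol I J c = 0) (j : Fin J) :
    ∑ c ∈ S with c.2 = j, g c = 0 := by
  refine sum_fiber_eq_zero_of_sum_eq_zero (sum_eq_zero_of_sum_smul_designCol_eq_zero hg)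
    (fun b => ?_) j
  simpa [Finset.sum_apply, designCol, sum_filter] using congrFun hg (Sum.inr (Sum.inr b))

end Design

theorem stmt0_general (I J : ℕ) (S : Finset (Fin I × Fin J)) :
    LinearIndependent ℝ (fun c : S => designCol I J c.val) ↔
      ∀ k, 2 ≤ k → k ≤ min I J → ∀ C ⊆ S, ¬ IsKCycle k C := by
  constructor
  · rintro hS k - - C hCS ⟨hk, hcard, hrows, hcols, -⟩
    have hlt := LinearIndepOn.card_lt_card_image_fst_add_card_image_snd (rowPart I J) (colPart I J)
      (fun c _ => designCol_eq_add c) (LinearIndepOn.mono hS (coe_subset.2 hCS))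
      (card_pos.1 (by omega))
    omega
  · intro hnc
    refine linearIndepOn_finset_iff.2 fun g hg c hc => by_contra fun hgc => ?_
    set T := {x ∈ S | g x ≠ 0}
    have hrows := mul_card_image_le_card T 2 (two_le_card_fiber_filter_ne_zero
      (sum_filter_fst_eq_zero_of_sum_smul_designCol_eq_zero hg))
    have hcols := mul_card_image_le_card T 2 (two_le_card_fiber_filter_ne_zero
      (sum_filter_snd_eq_zero_of_sum_smul_designCol_eq_zero hg))
    obtain ⟨C, hCT, hCne, hC⟩ :=
      exists_isTwoRegular_subset T ⟨c, mem_filter.2 ⟨hc, hgc⟩⟩ (by omega)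
    have hcyc := hC.isKCycle hCne
    exact hnc _ hcyc.1 hcyc.le_min C (hCT.trans (filter_subset _ S)) hcyc

theorem stmt0 (I J : ℕ) (hI : 1 ≤ I) (hJ : 1 ≤ J)
    (S : Finset (Fin I × Fin J)) (hcard : S.card = I + J - 1) :
    LinearIndependent ℝ (fun c : S => designCol I J c.val) ↔
      ∀ k, 2 ≤ k → k ≤ min I J → ∀ C ⊆ S, ¬ IsKCycle k C :=
  stmt0_general I J S
end

section
/- If a set of cells of an I×J table contains a k-cycle for some k ≥ 2, then the corresponding columns of the design matrix of the two-way independence loglinear model are linearly dependent; in particular, the set is not a strictly minimal pattern. -/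
/-!
The columns of any four cells forming a rectangle satisfy
`designCol (i, j) + designCol (i', j') = designCol (i, j') + designCol (i', j)`.
Fixing a cell `(i₁, j₀)` of a set of cells `C`, every column `designCol (i, j)` with
`(i, j) ∈ C` is therefore `designCol (i, j₀) + (designCol (i₁, j) - designCol (i₁, j₀))`, so the
columns of `C` span a space of dimension less than `r + s`, where `r` and `s` are the numbers of
rows and columns met by `C`. A `k`-cycle has `2k = r + s` cells, too many to be independent.
-/

open Finset Module Submodule

variable {I J : ℕ}

theorem designCol_add_designCol_swap (i i' : Fin I) (j j' : Fin J) :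
    designCol I J (i, j) + designCol I J (i', j') =
      designCol I J (i, j') + designCol I J (i', j) := by
  funext r
  rcases r with _ | a | b <;> simp only [designCol, Pi.add_apply, add_comm]

theorem designCol_eq_add_sub (i i₁ : Fin I) (j j₀ : Fin J) :
    designCol I J (i, j) =
      designCol I J (i, j₀) + (designCol I J (i₁, j) - designCol I J (i₁, j₀)) := by
  rw [add_sub, ← designCol_add_designCol_swap i i₁ j j₀, add_sub_cancel_right]

theorem finrank_span_designCol_lt (C : Finset (Fin I × Fin J)) (hC : C.Nonempty) :
    finrank ℝ (span ℝ (Set.range fun c : C => designCol I J c)) <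
      #(C.image Prod.fst) + #(C.image Prod.snd) := by
  classical
  obtain ⟨⟨i₁, j₀⟩, hc₀⟩ := hC
  have hj₀ : j₀ ∈ C.image Prod.snd := mem_image_of_mem _ hc₀
  set T := (C.image Prod.fst).image (fun i => designCol I J (i, j₀)) ∪
    ((C.image Prod.snd).erase j₀).image (fun j => designCol I J (i₁, j) - designCol I J (i₁, j₀))
  have hspan : span ℝ (Set.range fun c : C => designCol I J c) ≤ span ℝ (T : Set _) := by
    rw [span_le]
    rintro _ ⟨⟨⟨i, j⟩, hc⟩, rfl⟩
    change designCol I J (i, j) ∈ _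
    have hrow : designCol I J (i, j₀) ∈ span ℝ (T : Set _) :=
      subset_span (mem_union_left _ (mem_image_of_mem _ (mem_image_of_mem Prod.fst hc)))
    by_cases hj : j = j₀
    · subst hj
      exact hrow
    · rw [designCol_eq_add_sub i i₁ j j₀]
      refine add_mem hrow (subset_span (mem_union_right _ (mem_image_of_mem _ ?_)))
      exact mem_erase.2 ⟨hj, mem_image_of_mem Prod.snd hc⟩
  have hT : #T < #(C.image Prod.fst) + #(C.image Prod.snd) := by
    have := card_erase_add_one hj₀
    calc #T ≤ #(C.image Prod.fst) + #((C.image Prod.snd).erase j₀) :=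
          (card_union_le _ _).trans (add_le_add card_image_le card_image_le)
      _ < _ := by omega
  exact ((Submodule.finrank_mono hspan).trans (finrank_span_finset_le_card T)).trans_lt hT

theorem not_linearIndependent_designCol_of_card_le (C : Finset (Fin I × Fin J)) (hC : C.Nonempty)
    (hcard : #(C.image Prod.fst) + #(C.image Prod.snd) ≤ #C) :
    ¬ LinearIndependent ℝ (fun c : C => designCol I J c) := by
  intro hli
  have := finrank_span_designCol_lt C hC
  rw [finrank_span_eq_card hli, Fintype.card_coe] at this
  omega

theorem IsKCycle.not_linearIndependent_designCol {k : ℕ} {C : Finset (Fin I × Fin J)}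
    (hC : IsKCycle k C) : ¬ LinearIndependent ℝ (fun c : C => designCol I J c) := by
  obtain ⟨hk, hcard, hrows, hcols, -, -⟩ := hC
  refine not_linearIndependent_designCol_of_card_le C ?_ (by omega)
  rw [← card_pos]
  omega

theorem stmt1_general (I J : ℕ) (S C : Finset (Fin I × Fin J)) (k : ℕ)
    (hCS : C ⊆ S) (hC : IsKCycle k C) :
    ¬ LinearIndependent ℝ (fun c : S => designCol I J c.val) :=
  fun hS => hC.not_linearIndependent_designCol (LinearIndepOn.mono hS (coe_subset.2 hCS))

theorem stmt1 (I J : ℕ) (S C : Finset (Fin I × Fin J)) (k : ℕ) (hk : 2 ≤ k)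
    (hCS : C ⊆ S) (hC : IsKCycle k C) :
    ¬ LinearIndependent ℝ (fun c : S => designCol I J c.val) :=
  stmt1_general I J S C k hCS hC
end

section
/- The number of strictly minimal patterns for the independence model on an I×J table equals the number of spanning trees of the complete bipartite graph K_{I,J}, which is I^{J-1} · J^{I-1}. -/
/-!
Subtracting the row indicators from the constant row is an invertible row operation turning the
design matrix into the incidence matrix `N` of `K_{I,J}` with the row of one column vertex deleted.
So a set of `I + J - 1` cells is strictly minimal iff the corresponding maximal minor of `N` is
nonzero. Incidence matrices of bipartite graphs are totally unimodular, so each such minor is `0`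
or `±1`, and by Cauchy–Binet the count is `∑_S det(N_S)² = det(N Nᵀ)`. Finally
`N Nᵀ = [[J·1, 1], [1, I·1]]`, whose Schur complement is a rank-one perturbation of `I·1`.
-/

open Finset Function Matrix

namespace Matrix

section CauchyBinet

variable {m κ R : Type*} [Fintype m] [DecidableEq m] [CommRing R]

theorem det_mul_eq_sum_det_submatrix_mul_prod [Fintype κ] (A : Matrix m κ R)
    (B : Matrix κ m R) :
    (A * B).det = ∑ p : m → κ, (A.submatrix id p).det * ∏ i, B (p i) i := by
  simp only [det_apply', mul_apply, prod_univ_sum, Fintype.piFinset_univ, prod_mul_distrib,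
    mul_sum, sum_mul, submatrix_apply, id, mul_assoc]
  exact sum_comm

theorem sum_perm_det_submatrix_mul_prod (A : Matrix m κ R) (B : Matrix κ m R) (g : m → κ) :
    ∑ σ : Equiv.Perm m, (A.submatrix id (g ∘ σ)).det * ∏ i, B (g (σ i)) i
      = (A.submatrix id g).det * (B.submatrix g id).det := by
  have hperm (σ : Equiv.Perm m) : A.submatrix id (g ∘ σ) = (A.submatrix id g).submatrix id σ :=
    rfl
  simp only [hperm, det_permute', det_apply' (B.submatrix g id), mul_sum, submatrix_apply, id]
  exact sum_congr rfl fun σ _ => by ring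

/-- The **Cauchy–Binet formula**. -/
theorem det_mul_eq_sum_powersetCard [Fintype κ] (A : Matrix m κ R) (B : Matrix κ m R)
    (f : Finset κ → m → κ)
    (hf : ∀ S : Finset κ, S.card = Fintype.card m → Injective (f S) ∧ Set.range (f S) = S) :
    (A * B).det = ∑ S ∈ univ.powersetCard (Fintype.card m),
      (A.submatrix id (f S)).det * (B.submatrix (f S) id).det := by
  classical
  have hnoninj (p : m → κ) (hp : ¬Injective p) : (A.submatrix id p).det = 0 := by
    obtain ⟨i, j, hpij, hij⟩ := not_injective_iff.mp hp
    exact det_zero_of_column_eq hij fun k => by simp [hpij]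
  have hrange (S : Finset κ) (σ : Equiv.Perm m) (hS : S.card = Fintype.card m) :
      Set.range (f S ∘ σ) = S := by
    rw [EquivLike.range_comp, (hf S hS).2]
  calc (A * B).det
      = ∑ p ∈ univ.filter Injective, (A.submatrix id p).det * ∏ i, B (p i) i := by
        rw [det_mul_eq_sum_det_submatrix_mul_prod, sum_filter_of_ne]
        intro p _ hp
        by_contra hinj
        exact hp (by rw [hnoninj p hinj, zero_mul])
    _ = ∑ S ∈ univ.powersetCard (Fintype.card m), ∑ σ : Equiv.Perm m,
          (A.submatrix id (f S ∘ σ)).det * ∏ i, B (f S (σ i)) i := by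
        rw [← sum_product']
        symm
        refine sum_bij (fun Sσ _ => f Sσ.1 ∘ Sσ.2) ?_ ?_ ?_ fun _ _ => rfl
        · rintro ⟨S, σ⟩ hSσ
          simp only [mem_product, mem_powersetCard_univ] at hSσ
          simpa using (hf S hSσ.1).1.comp σ.injective
        · rintro ⟨S, σ⟩ hSσ ⟨S', σ'⟩ hSσ' heq
          simp only [mem_product, mem_powersetCard_univ] at hSσ hSσ'
          have hSS' : S = S' := by
            rw [← Finset.coe_inj, ← hrange S σ hSσ.1, ← hrange S' σ' hSσ'.1]
            exact congrArg Set.range heq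
          subst hSS'
          simp only [Prod.mk.injEq, true_and]
          exact Equiv.ext fun i => (hf S hSσ.1).1 (congrFun heq i)
        · intro p hp
          simp only [mem_filter, mem_univ, true_and] at hp
          set S := univ.image p
          have hS : S.card = Fintype.card m := by
            rw [card_image_of_injective _ hp, card_univ]
          have hpS (i : m) : ∃ j, f S j = p i := by
            rw [← Set.mem_range, (hf S hS).2]
            simp [S]
          choose τ hτ using hpS
          have hτ_inj : Injective τ := fun i i' h => hp (by rw [← hτ i, ← hτ i', h])
          refine ⟨(S, Equiv.ofBijective τ (Finite.injective_iff_bijective.mp hτ_inj)), ?_,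
            funext hτ⟩
          simpa using hS
    _ = _ := sum_congr rfl fun S _ => sum_perm_det_submatrix_mul_prod A B (f S)

end CauchyBinet

section BipartiteIncidence

variable {m n R : Type*}

/-- `A` is an incidence matrix of a bipartite graph with vertex classes the fibres of `side`,
some of whose vertex rows may have been deleted. -/
def IsBipartiteIncidence [Zero R] [One R] (A : Matrix m n R) (side : m → Bool) : Prop :=
  (∀ i j, A i j = 0 ∨ A i j = 1) ∧
    ∀ i i' j, side i = side i' → A i j ≠ 0 → A i' j ≠ 0 → i = i'

variable [CommRing R]

theorem IsBipartiteIncidence.submatrix {m' n' : Type*} {A : Matrix m n R} {side : m → Bool}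
    (hA : A.IsBipartiteIncidence side) {f : m' → m} (hf : Injective f) (g : n' → n) :
    (A.submatrix f g).IsBipartiteIncidence (side ∘ f) :=
  ⟨fun i j => hA.1 (f i) (g j), fun _ _ _ hs hi hi' => hf (hA.2 _ _ _ hs hi hi')⟩

theorem IsBipartiteIncidence.eq_one_of_ne_zero {A : Matrix m n R} {side : m → Bool}
    (hA : A.IsBipartiteIncidence side) {i : m} {j : n} (h : A i j ≠ 0) : A i j = 1 :=
  (hA.1 i j).resolve_left h

/-- The rows weighted `+1` on one side and `-1` on the other sum to zero. -/
theorem IsBipartiteIncidence.det_eq_zero [Fintype m] [DecidableEq m] [Nonempty m]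
    {A : Matrix m m R} {side : m → Bool} (hA : A.IsBipartiteIncidence side)
    (hboth : ∀ j b, ∃ i, side i = b ∧ A i j ≠ 0) : A.det = 0 := by
  set c : m → R := fun i => if side i then 1 else -1
  set i₀ := Classical.arbitrary m
  have hc : IsUnit (c i₀) := by
    simp only [c]
    split_ifs <;> simp
  have hrows : ∑ i, c i • A i = 0 := by
    funext j
    obtain ⟨i₁, hi₁, hA₁⟩ := hboth j true
    obtain ⟨i₂, hi₂, hA₂⟩ := hboth j false
    have hzero (i : m) (hi : i ≠ i₁ ∧ i ≠ i₂) : c i * A i j = 0 := by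
      by_contra h
      have hAi := right_ne_zero_of_mul h
      cases hs : side i
      · exact hi.2 (hA.2 _ _ _ (hs.trans hi₂.symm) hAi hA₂)
      · exact hi.1 (hA.2 _ _ _ (hs.trans hi₁.symm) hAi hA₁)
    simp only [Finset.sum_apply, Pi.smul_apply, smul_eq_mul, Pi.zero_apply]
    rw [Fintype.sum_eq_add i₁ i₂ (fun h => by simp [h, hi₂] at hi₁) hzero,
      hA.eq_one_of_ne_zero hA₁, hA.eq_one_of_ne_zero hA₂]
    simp [c, hi₁, hi₂]
  have hupdate := det_updateRow_sum A i₀ c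
  rw [hrows, det_eq_zero_of_row_eq_zero i₀ (by simp), smul_eq_mul] at hupdate
  exact hc.mul_right_eq_zero.mp hupdate.symm

/-- Either every column meets both sides, or some column has at most one nonzero entry and we
expand along it. -/
theorem IsBipartiteIncidence.det_mem_range_signType_cast {k : ℕ}
    {A : Matrix (Fin k) (Fin k) R} {side : Fin k → Bool} (hA : A.IsBipartiteIncidence side) :
    A.det ∈ Set.range SignType.cast := by
  induction k with
  | zero => exact ⟨1, by simp⟩
  | succ k ih =>
    by_cases hboth : ∀ j b, ∃ i, side i = b ∧ A i j ≠ 0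
    · exact ⟨0, by simp [hA.det_eq_zero hboth]⟩
    push Not at hboth
    obtain ⟨j, b, hj⟩ := hboth
    obtain ⟨i, hi⟩ : ∃ i, ∀ i', i' ≠ i → A i' j = 0 := by
      by_cases hnz : ∃ i, A i j ≠ 0
      · obtain ⟨i, hAi⟩ := hnz
        have hside {i : Fin (k + 1)} (h : A i j ≠ 0) : side i = !b :=
          Bool.eq_not_iff.mpr fun hb => h (hj i hb)
        exact ⟨i, fun i' hi' => by_contra fun hAi' =>
          hi' (hA.2 _ _ _ ((hside hAi').trans (hside hAi).symm) hAi' hAi)⟩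
      · push Not at hnz
        exact ⟨0, fun i' _ => hnz i'⟩
    obtain ⟨s, hs⟩ := ih (hA.submatrix (Fin.succAbove_right_injective (p := i)) j.succAbove)
    rw [det_succ_column A j, Fintype.sum_eq_single i fun i' h => by simp [hi i' h]]
    rcases hA.1 i j with h | h
    · exact ⟨0, by simp [h]⟩
    · exact ⟨(-1) ^ (i + j : ℕ) * s, by simp [h, hs]⟩

theorem IsBipartiteIncidence.isTotallyUnimodular {A : Matrix m n R} {side : m → Bool}
    (hA : A.IsBipartiteIncidence side) : A.IsTotallyUnimodular :=
  fun _ _ g hf _ => (hA.submatrix hf g).det_mem_range_signType_cast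

end BipartiteIncidence

theorem det_fromBlocks_smul_one_ones {p q K : Type*} [Fintype p] [Fintype q]
    [DecidableEq p] [DecidableEq q] [Field K] {a b : K} (ha : a ≠ 0) (hb : b ≠ 0) :
    (fromBlocks (a • 1) (of fun _ _ => 1) (of fun _ _ => 1) (b • 1) :
        Matrix (p ⊕ q) (p ⊕ q) K).det
      = a ^ Fintype.card p * b ^ Fintype.card q *
          (1 - Fintype.card p * Fintype.card q / (a * b)) := by
  have hfactor : (fromBlocks (a • 1) (of fun _ _ => 1) (of fun _ _ => 1) (b • 1) :
        Matrix (p ⊕ q) (p ⊕ q) K)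
      = fromBlocks (a • 1) 0 0 1 * fromBlocks 1 (of fun _ _ => a⁻¹) (of fun _ _ => 1) (b • 1) := by
    rw [fromBlocks_multiply]
    congr 1 <;> ext <;> simp [ha]
  have hschur : b • 1 - (of fun _ _ => 1 : Matrix q p K) * (of fun _ _ => a⁻¹ : Matrix p q K)
      = b • ((1 : Matrix q q K) + replicateCol Unit (fun _ : q => -(Fintype.card p / (a * b)))
          * replicateRow Unit (fun _ : q => (1 : K))) := by
    ext i j
    simp only [sub_apply, smul_apply, one_apply, smul_eq_mul, mul_apply, of_apply, add_apply,
      replicateCol_apply, replicateRow_apply, sum_const, card_univ, nsmul_eq_mul,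
      Fintype.card_unit, Nat.cast_one]
    split_ifs <;> field_simp <;> ring
  rw [hfactor, det_mul, det_fromBlocks_zero₂₁, det_fromBlocks_one₁₁, hschur, det_smul, det_smul,
    det_one_add_replicateCol_mul_replicateRow]
  simp only [det_one, mul_one, dotProduct, one_mul, sum_const, card_univ, nsmul_eq_mul]
  field_simp
  ring

end Matrix

theorem Finset.exists_enumeration (m κ : Type*) [Fintype m] [Nonempty κ] :
    ∃ f : Finset κ → m → κ,
      ∀ S : Finset κ, S.card = Fintype.card m → Injective (f S) ∧ Set.range (f S) = S := by
  have (S : Finset κ) :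
      ∃ g : m → κ, S.card = Fintype.card m → Injective g ∧ Set.range g = S := by
    by_cases h : S.card = Fintype.card m
    · let e : m ≃ S := (Fintype.equivFin m).trans (S.equivFinOfCardEq h).symm
      refine ⟨Subtype.val ∘ e, fun _ => ⟨Subtype.val_injective.comp e.injective, ?_⟩⟩
      rw [EquivLike.range_comp, Subtype.range_coe]
    · exact ⟨fun _ => Classical.arbitrary κ, fun h' => absurd h' h⟩
  exact Classical.skolem.mp this

/-- The incidence matrix of `K_{I,J}` without the row of the last column vertex. -/
def reducedIncidence (I J : ℕ) : Matrix (Fin I ⊕ Fin (J - 1)) (Fin I × Fin J) ℝ :=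
  of fun w c => Sum.elim (fun i => if c.1 = i then 1 else 0)
    (fun b => if c.2 = Fin.castLE (J.sub_le 1) b then 1 else 0) w

theorem reducedIncidence_isBipartiteIncidence (I J : ℕ) :
    (reducedIncidence I J).IsBipartiteIncidence Sum.isLeft := by
  refine ⟨fun w c => ?_, ?_⟩
  · rcases w with i | b <;> simp only [reducedIncidence, of_apply, Sum.elim_inl, Sum.elim_inr] <;>
      split_ifs <;> simp
  · rintro (i | b) (i' | b') c hside h h' <;> simp_all [reducedIncidence]

theorem reducedIncidence_mul_transpose (I J : ℕ) :
    reducedIncidence I J * (reducedIncidence I J)ᵀ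
      = fromBlocks ((J : ℝ) • 1) (of fun _ _ => 1) (of fun _ _ => 1) ((I : ℝ) • 1) := by
  ext (i | b) (i' | b') <;>
    simp [reducedIncidence, mul_apply, Fintype.sum_prod_type, one_apply, eq_comm, apply_ite card]

theorem det_reducedIncidence_mul_transpose {I J : ℕ} (hI : 1 ≤ I) (hJ : 1 ≤ J) :
    (reducedIncidence I J * (reducedIncidence I J)ᵀ).det = (I : ℝ) ^ (J - 1) * J ^ (I - 1) := by
  have hI0 : (I : ℝ) ≠ 0 := Nat.cast_ne_zero.mpr (by omega)
  have hJ0 : (J : ℝ) ≠ 0 := Nat.cast_ne_zero.mpr (by omega)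
  rw [reducedIncidence_mul_transpose, det_fromBlocks_smul_one_ones hJ0 hI0]
  obtain ⟨I, rfl⟩ := Nat.exists_eq_add_of_le' hI
  obtain ⟨J, rfl⟩ := Nat.exists_eq_add_of_le' hJ
  simp only [Fintype.card_fin, Nat.add_sub_cancel]
  push_cast
  field_simp
  ring

/-- The row operation taking `reducedIncidence` to the design matrix. -/
def designMap (I J : ℕ) :
    (Fin I ⊕ Fin (J - 1) → ℝ) →ₗ[ℝ] (Unit ⊕ Fin (I - 1) ⊕ Fin (J - 1) → ℝ) where
  toFun x := Sum.elim (fun _ => ∑ i, x (Sum.inl i))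
    (Sum.elim (fun a => x (Sum.inl (Fin.castLE (I.sub_le 1) a))) (fun b => x (Sum.inr b)))
  map_add' x y := by ext (_ | a | b) <;> simp [sum_add_distrib]
  map_smul' r x := by ext (_ | a | b) <;> simp [mul_sum]

theorem designMap_col_reducedIncidence (I J : ℕ) (c : Fin I × Fin J) :
    designMap I J ((reducedIncidence I J).col c) = designCol I J c := by
  ext (_ | a | b)
  · simp [designMap, reducedIncidence, designCol]
  all_goals simp [designMap, reducedIncidence, designCol, Fin.ext_iff]

theorem designMap_injective (I J : ℕ) : Injective (designMap I J) := by
  rw [← LinearMap.ker_eq_bot, LinearMap.ker_eq_bot']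
  intro x hx
  have hval := congrFun hx
  have hlow (i : Fin I) (hi : (i : ℕ) < I - 1) : x (Sum.inl i) = 0 := by
    simpa [designMap] using hval (Sum.inr (Sum.inl ⟨i, hi⟩))
  ext (i | b)
  · by_cases hi : (i : ℕ) < I - 1
    · exact hlow i hi
    have hsum : ∑ i, x (Sum.inl i) = 0 := by simpa [designMap] using hval (Sum.inl ())
    rwa [Fintype.sum_eq_single i fun i' hi' => hlow i' (by
      have := Fin.val_ne_iff.mpr hi'; have := i'.isLt; omega)] at hsum
  · simpa [designMap] using hval (Sum.inr (Sum.inr b))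

theorem linearIndependent_designCol_iff {I J : ℕ} {S : Finset (Fin I × Fin J)}
    {g : Fin I ⊕ Fin (J - 1) → Fin I × Fin J} (hg : Injective g) (hgS : Set.range g = S) :
    LinearIndependent ℝ (fun c : S => designCol I J c)
      ↔ ((reducedIncidence I J).submatrix id g).det ≠ 0 := by
  rw [← isUnit_iff_ne_zero, ← isUnit_iff_isUnit_det, ← linearIndependent_cols_iff_isUnit,
    ← (designMap I J).linearIndependent_iff_of_injOn (designMap_injective I J).injOn]
  refine (linearIndependent_equiv' ((Equiv.ofInjective g hg).trans (Equiv.setCongr hgS)) ?_).symm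
  funext w
  exact (designMap_col_reducedIncidence I J (g w)).symm

open Classical in
theorem stmt9 (I J : ℕ) (hI : 1 ≤ I) (hJ : 1 ≤ J) :
    (((Finset.univ : Finset (Fin I × Fin J)).powersetCard (I + J - 1)).filter
      (fun S => LinearIndependent ℝ (fun c : {x // x ∈ S} => designCol I J c.val))).card
      = I ^ (J - 1) * J ^ (I - 1) := by
  set N := reducedIncidence I J
  have hcard : Fintype.card (Fin I ⊕ Fin (J - 1)) = I + J - 1 := by
    simp only [Fintype.card_sum, Fintype.card_fin]
    omega
  have : Nonempty (Fin I × Fin J) := ⟨(⟨0, hI⟩, ⟨0, hJ⟩)⟩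
  obtain ⟨f, hf⟩ := Finset.exists_enumeration (Fin I ⊕ Fin (J - 1)) (Fin I × Fin J)
  have hterm : ∀ S ∈ univ.powersetCard (Fintype.card (Fin I ⊕ Fin (J - 1))),
      (if LinearIndependent ℝ (fun c : {x // x ∈ S} => designCol I J c.val) then 1 else 0 : ℝ)
        = (N.submatrix id (f S)).det * (Nᵀ.submatrix (f S) id).det := by
    intro S hS
    obtain ⟨hinj, hrange⟩ := hf S (mem_powersetCard_univ.mp hS)
    rw [linearIndependent_designCol_iff hinj hrange, ← transpose_submatrix, det_transpose]
    obtain ⟨s, hs⟩ := (isTotallyUnimodular_iff_fintype N).mp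
      (reducedIncidence_isBipartiteIncidence I J).isTotallyUnimodular _ id (f S)
    rcases s <;> simp [N, ← hs]
  have hcount := (det_mul_eq_sum_powersetCard N Nᵀ f hf).trans (sum_congr rfl hterm).symm
  rw [det_reducedIncidence_mul_transpose hI hJ, hcard, ← natCast_card_filter] at hcount
  exact_mod_cast hcount.symm
end
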